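/- arXiv:1810.11617 — 5 statements merged into one kernel-verified Lean document; each statement's English description precedes it below -/
import Mathlib

section
/- Let X and Y be real Banach spaces, C a nonempty closed subset of X, f : X → ℝ and g : X → Y, and let x₀ ∈ C with g(x₀) = 0 be a local minimizer of f over the set {x ∈ C : g(x) = 0}. Assume: f is Gâteaux differentiable at x₀ with derivative Df(x₀) ∈ X* and is Lipschitz with constant K_f > 0 on some ball B(x₀, r); g is Gâteaux differentiable at x₀ with derivative Dg(x₀) : X → Y a continuous linear map; the system is calm at x₀, i.e. there exist a > 0 and s > 0 such that dist(x, g⁻¹(0) ∩ C) ≤ a‖g(x)‖ for all x ∈ B(x₀, s) ∩ C; and x₀ lies in the topological interior of C. Then there exists y* ∈ Y* with ‖y*‖ ≤ K_f · a such that Df(x₀) + y* ∘ Dg(x₀) = 0 in X*. -/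
/-!
Clarke's exact penalization: since `f` is `K`-Lipschitz near `x₀` and `x₀` minimizes `f` locally on
`S = g⁻¹(0) ∩ C`, the point `x₀` is an unconstrained local minimizer of `f + K · dist(·, S)`, and
by calmness (and `x₀ ∈ int C`) also of `f + K a ‖g‖`. Differentiating along rays gives
`-Df(x₀) h ≤ K a ‖Dg(x₀) h‖` for every `h`, so `-Df(x₀)` factors through `Dg(x₀)` with a functional
of norm at most `K a` on the range of `Dg(x₀)`; Hahn–Banach extends it to all of `Y`.
-/

open Filter Metric Topology Set

noncomputable section

/-- `g` is Gâteaux differentiable at `x` with (continuous linear) derivative `D`: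
for every direction `h`, the difference quotients converge as `τ → 0⁺`. -/
def GateauxAt {X Y : Type*} [NormedAddCommGroup X] [NormedSpace ℝ X]
    [NormedAddCommGroup Y] [NormedSpace ℝ Y] (g : X → Y) (x : X) (D : X →L[ℝ] Y) : Prop :=
  ∀ h : X, Tendsto (fun τ : ℝ => τ⁻¹ • (g (x + τ • h) - g x)) (𝓝[>] (0:ℝ)) (𝓝 (D h))

open scoped NNReal

theorem IsLocalMinOn.isLocalMin_add_mul_infDist {α : Type*} [PseudoMetricSpace α] {f : α → ℝ}
    {S U : Set α} {x₀ : α} {K : ℝ≥0} (hmin : IsLocalMinOn f S x₀) (hx₀ : x₀ ∈ S)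
    (hf : LipschitzOnWith K f U) (hU : U ∈ 𝓝 x₀) :
    IsLocalMin (fun x => f x + K * infDist x S) x₀ := by
  obtain ⟨ε, hε, hε_ball⟩ :=
    Metric.eventually_nhds_iff.1 (Eventually.and hU (eventually_nhdsWithin_iff.1 hmin))
  filter_upwards [ball_mem_nhds x₀ (div_pos hε three_pos)] with x hx
  rw [mem_ball] at hx
  have hxU : x ∈ U := (hε_ball (by linarith)).1
  have hclose : ∀ η ∈ Ioo (0 : ℝ) (ε / 3), f x₀ ≤ f x + K * (infDist x S + η) := by
    rintro η ⟨hη, hηε⟩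
    obtain ⟨z, hzS, hxz⟩ := (infDist_lt_iff ⟨x₀, hx₀⟩).1 (lt_add_of_pos_right (infDist x S) hη)
    have hzx₀ : dist z x₀ < ε := by
      have := infDist_le_dist_of_mem hx₀ (x := x)
      linarith [dist_triangle z x x₀, dist_comm x z]
    obtain ⟨hzU, hfz⟩ := hε_ball hzx₀
    have hLip : f z - f x ≤ K * dist z x :=
      (le_abs_self _).trans ((Real.dist_eq _ _).symm.le.trans (hf.dist_le_mul z hzU x hxU))
    rw [dist_comm] at hLip
    nlinarith [hfz hzS, K.coe_nonneg]
  have hlim : Tendsto (fun η => f x + K * (infDist x S + η)) (𝓝[>] 0)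
      (𝓝 (f x + K * (infDist x S + 0))) :=
    ((by fun_prop : Continuous fun η : ℝ => f x + K * (infDist x S + η)).tendsto 0).mono_left
      nhdsWithin_le_nhds
  simpa [infDist_zero_of_mem hx₀] using
    ge_of_tendsto hlim (eventually_of_mem (Ioo_mem_nhdsGT (div_pos hε three_pos)) hclose)

section

variable {X Y : Type*} [NormedAddCommGroup X] [NormedSpace ℝ X]
  [NormedAddCommGroup Y] [NormedSpace ℝ Y]

theorem IsLocalMin.nonneg_of_tendsto_slope {φ : X → ℝ} {x₀ h : X} {L : ℝ}
    (hmin : IsLocalMin φ x₀)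
    (hL : Tendsto (fun τ : ℝ => τ⁻¹ * (φ (x₀ + τ • h) - φ x₀)) (𝓝[>] 0) (𝓝 L)) : 0 ≤ L := by
  have hray : Tendsto (fun τ : ℝ => x₀ + τ • h) (𝓝[>] 0) (𝓝 x₀) :=
    ((by fun_prop : Continuous fun τ : ℝ => x₀ + τ • h).tendsto' 0 x₀ (by simp)).mono_left
      nhdsWithin_le_nhds
  refine ge_of_tendsto hL ?_
  filter_upwards [hray.eventually hmin, self_mem_nhdsWithin] with τ hτ (hτ_pos : 0 < τ)
  exact mul_nonneg (inv_nonneg.2 hτ_pos.le) (sub_nonneg.2 hτ)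

theorem neg_le_mul_norm_of_isLocalMin_add_mul_norm {f : X → ℝ} {g : X → Y} {x₀ : X}
    {Df : X →L[ℝ] ℝ} {Dg : X →L[ℝ] Y} {c : ℝ}
    (hmin : IsLocalMin (fun x => f x + c * ‖g x‖) x₀) (hg : g x₀ = 0)
    (hDf : GateauxAt f x₀ Df) (hDg : GateauxAt g x₀ Dg) (h : X) : -Df h ≤ c * ‖Dg h‖ := by
  suffices 0 ≤ Df h + c * ‖Dg h‖ by linarith
  refine hmin.nonneg_of_tendsto_slope (h := h) (((hDf h).add ((hDg h).norm.const_mul c)).congr' ?_)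
  filter_upwards [self_mem_nhdsWithin] with τ (hτ : 0 < τ)
  simp only [hg, sub_zero, norm_zero, mul_zero, add_zero, smul_eq_mul, norm_smul,
    Real.norm_eq_abs, abs_inv, abs_of_pos hτ]
  ring

theorem exists_norm_le_comp_eq_of_le_mul_norm (ℓ : X →L[ℝ] ℝ) (A : X →L[ℝ] Y) {c : ℝ}
    (hc : 0 ≤ c) (hℓ : ∀ x, ℓ x ≤ c * ‖A x‖) :
    ∃ y : StrongDual ℝ Y, ‖y‖ ≤ c ∧ y.comp A = ℓ := by
  have habs : ∀ x, |ℓ x| ≤ c * ‖A x‖ := fun x =>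
    abs_le.2 ⟨by simpa using neg_le_neg (hℓ (-x)), hℓ x⟩
  have hker : LinearMap.ker (A : X →ₗ[ℝ] Y) ≤ LinearMap.ker (ℓ : X →ₗ[ℝ] ℝ) := fun x hx => by
    simpa [show A x = 0 from hx] using habs x
  let ψ : LinearMap.range (A : X →ₗ[ℝ] Y) →ₗ[ℝ] ℝ :=
    (LinearMap.ker _).liftQ ℓ hker ∘ₗ (A : X →ₗ[ℝ] Y).quotKerEquivRange.symm.toLinearMap
  have hψ : ∀ x, ψ ⟨A x, LinearMap.mem_range_self _ x⟩ = ℓ x := fun x => by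
    simpa [ψ] using congrArg ((LinearMap.ker _).liftQ (ℓ : X →ₗ[ℝ] ℝ) hker)
      ((A : X →ₗ[ℝ] Y).quotKerEquivRange_symm_apply_image x (LinearMap.mem_range_self _ x))
  have hψ_le : ∀ y, ‖ψ y‖ ≤ c * ‖y‖ := by
    rintro ⟨_, x, rfl⟩
    simpa [hψ] using habs x
  obtain ⟨y, hy_ext, hy_norm⟩ := exists_extension_norm_eq _ (ψ.mkContinuous c hψ_le)
  refine ⟨y, hy_norm ▸ ψ.mkContinuous_norm_le hc hψ_le, ?_⟩
  ext x
  exact (hy_ext ⟨A x, LinearMap.mem_range_self _ x⟩).trans (hψ x)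

end

theorem stmt0_general {X Y : Type*} [NormedAddCommGroup X] [NormedSpace ℝ X]
    [NormedAddCommGroup Y] [NormedSpace ℝ Y]
    (C : Set X)
    (f : X → ℝ) (g : X → Y) (x₀ : X) (hx₀C : x₀ ∈ C) (hgx₀ : g x₀ = 0)
    -- x₀ is a local minimizer of f over {x ∈ C : g x = 0}
    (hmin : ∃ ε > 0, ∀ x ∈ C, g x = 0 → ‖x - x₀‖ ≤ ε → f x₀ ≤ f x)
    -- f is Gâteaux differentiable at x₀ and Lipschitz with constant Kf on a ball around x₀
    (Df : X →L[ℝ] ℝ) (hDf : GateauxAt f x₀ Df)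
    (Kf : ℝ) (hKf : 0 < Kf)
    (hfLip : ∃ r > 0, ∀ x ∈ closedBall x₀ r, ∀ x' ∈ closedBall x₀ r,
      |f x - f x'| ≤ Kf * ‖x - x'‖)
    -- g is Gâteaux differentiable at x₀
    (Dg : X →L[ℝ] Y) (hDg : GateauxAt g x₀ Dg)
    -- calmness of the system `g x = 0, x ∈ C` at x₀
    (a : ℝ) (ha : 0 < a) (s : ℝ) (hs : 0 < s)
    (hcalm : ∀ x ∈ closedBall x₀ s ∩ C, infDist x (g ⁻¹' {0} ∩ C) ≤ a * ‖g x‖)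
    -- x₀ lies in the interior of C
    (hint : x₀ ∈ interior C) :
    ∃ ystar : Y →L[ℝ] ℝ, ‖ystar‖ ≤ Kf * a ∧ Df + ystar.comp Dg = 0 := by
  obtain ⟨ε, hε, hmin⟩ := hmin
  obtain ⟨r, hr, hfLip⟩ := hfLip
  have hminS : IsLocalMinOn f (g ⁻¹' {0} ∩ C) x₀ := by
    filter_upwards [inter_mem_nhdsWithin _ (closedBall_mem_nhds x₀ hε)] with x ⟨⟨hgx, hxC⟩, hx⟩
    exact hmin x hxC hgx (mem_closedBall_iff_norm.1 hx)
  have hLip : LipschitzOnWith Kf.toNNReal f (closedBall x₀ r) :=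
    .of_dist_le_mul fun x hx x' hx' => by
      simpa [Real.coe_toNNReal _ hKf.le, Real.dist_eq, dist_eq_norm] using hfLip x hx x' hx'
  have hpen : IsLocalMin (fun x => f x + Kf * a * ‖g x‖) x₀ := by
    filter_upwards [hminS.isLocalMin_add_mul_infDist ⟨hgx₀, hx₀C⟩ hLip (closedBall_mem_nhds x₀ hr),
      mem_interior_iff_mem_nhds.1 hint, closedBall_mem_nhds x₀ hs] with x hx hxC hxs
    simp only [infDist_zero_of_mem (show x₀ ∈ g ⁻¹' {0} ∩ C from ⟨hgx₀, hx₀C⟩), mul_zero,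
      add_zero, Real.coe_toNNReal _ hKf.le] at hx
    rw [hgx₀, norm_zero, mul_zero, add_zero, mul_assoc]
    exact hx.trans (by gcongr; exact hcalm x ⟨hxs, hxC⟩)
  obtain ⟨ystar, hnorm, hcomp⟩ := exists_norm_le_comp_eq_of_le_mul_norm (-Df) Dg
    (by positivity) (neg_le_mul_norm_of_isLocalMin_add_mul_norm hpen hgx₀ hDf hDg)
  exact ⟨ystar, hnorm, by rw [hcomp, add_neg_cancel]⟩

theorem stmt0 {X Y : Type*} [NormedAddCommGroup X] [NormedSpace ℝ X] [CompleteSpace X]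
    [NormedAddCommGroup Y] [NormedSpace ℝ Y] [CompleteSpace Y]
    (C : Set X) (hCne : C.Nonempty) (hCcl : IsClosed C)
    (f : X → ℝ) (g : X → Y) (x₀ : X) (hx₀C : x₀ ∈ C) (hgx₀ : g x₀ = 0)
    -- x₀ is a local minimizer of f over {x ∈ C : g x = 0}
    (hmin : ∃ ε > 0, ∀ x ∈ C, g x = 0 → ‖x - x₀‖ ≤ ε → f x₀ ≤ f x)
    -- f is Gâteaux differentiable at x₀ and Lipschitz with constant Kf on a ball around x₀
    (Df : X →L[ℝ] ℝ) (hDf : GateauxAt f x₀ Df)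
    (Kf : ℝ) (hKf : 0 < Kf)
    (hfLip : ∃ r > 0, ∀ x ∈ closedBall x₀ r, ∀ x' ∈ closedBall x₀ r,
      |f x - f x'| ≤ Kf * ‖x - x'‖)
    -- g is Gâteaux differentiable at x₀
    (Dg : X →L[ℝ] Y) (hDg : GateauxAt g x₀ Dg)
    -- calmness of the system `g x = 0, x ∈ C` at x₀
    (a : ℝ) (ha : 0 < a) (s : ℝ) (hs : 0 < s)
    (hcalm : ∀ x ∈ closedBall x₀ s ∩ C, infDist x (g ⁻¹' {0} ∩ C) ≤ a * ‖g x‖)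
    -- x₀ lies in the interior of C
    (hint : x₀ ∈ interior C) :
    ∃ ystar : Y →L[ℝ] ℝ, ‖ystar‖ ≤ Kf * a ∧ Df + ystar.comp Dg = 0 :=
  stmt0_general C f g x₀ hx₀C hgx₀ hmin Df hDf Kf hKf hfLip Dg hDg a ha s hs hcalm hint
end
end

section
/- Let X and Y be real Banach spaces, C a nonempty closed subset of X, f : X → ℝ and g : X → Y, and let x₀ ∈ C with g(x₀) = 0 be a local minimizer of f over {x ∈ C : g(x) = 0}. Assume: f is Gâteaux differentiable at x₀ and Lipschitz with constant K_f > 0 near x₀; g is Gâteaux differentiable at x₀ and Lipschitz with constant K_g > 0 near x₀; the system is calm at x₀ with constant a > 0; and the contingent cone K(C, x₀) is convex. Then there exist y* ∈ Y* with ‖y*‖ ≤ K_f·a and x* ∈ X* satisfying ⟨x*, h⟩ ≤ 0 for all h ∈ K(C, x₀), such that Df(x₀) + y* ∘ Dg(x₀) + x* = 0 in X*. -/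
/-!
Calmness makes the constraint `g x = 0` an exact penalty: by Clarke's argument, `x₀` minimizes
`φ = f + K_f a ‖g‖` over `C` near `x₀`. Since `φ` is Lipschitz near `x₀` with directional
derivative `Df h + K_f a ‖Dg h‖`, that derivative is nonnegative along every contingent direction
`h ∈ K = K(C, x₀)`. The multiplier is `y* = -L`, where `L` is a Hahn–Banach linear minorant of
the sublinear function `q y = inf_{h ∈ K, t ≥ 0} t Df h + K_f a ‖y - t Dg h‖` (subadditive
because `K` is convex). Then `q ≤ K_f a ‖·‖` bounds `‖y*‖`, and `q (Dg h) ≤ Df h` gives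
`Df h + y* (Dg h) ≥ 0` on `K`, i.e. `x* = -(Df + y* ∘ Dg) ∈ K⁰`.
-/

open Filter Metric Topology Set

noncomputable section

/-- Lower Dini directional derivative of the distance function to `A` at `x`
in the direction `h`: `liminf_{τ→0⁺} dist(x + τ h, A)/τ`. -/
def lowerDini {X : Type*} [NormedAddCommGroup X] [NormedSpace ℝ X]
    (A : Set X) (x h : X) : ℝ :=
  liminf (fun τ : ℝ => infDist (x + τ • h) A / τ) (𝓝[>] (0:ℝ))

/-- The contingent (Bouligand) tangent cone to `A` at `x`. -/
def contingentCone {X : Type*} [NormedAddCommGroup X] [NormedSpace ℝ X]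
    (A : Set X) (x : X) : Set X :=
  {h | lowerDini A x h = 0}

open Pointwise

theorem le_add_mul_infDist_of_localMinOn {X : Type*} [SeminormedAddCommGroup X] {f : X → ℝ}
    {S : Set X} {x₀ x : X} {ε r K : ℝ}
    (hK : 0 < K) (hx₀ : x₀ ∈ S) (hmin : ∀ y ∈ S, ‖y - x₀‖ ≤ ε → f x₀ ≤ f y)
    (hLip : ∀ y ∈ closedBall x₀ r, ∀ y' ∈ closedBall x₀ r, |f y - f y'| ≤ K * ‖y - y'‖)
    (hx : 2 * ‖x - x₀‖ ≤ min ε r) : f x₀ ≤ f x + K * infDist x S := by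
  have hε := min_le_left ε r
  have hr := min_le_right ε r
  have hxr : x ∈ closedBall x₀ r := mem_closedBall_iff_norm.2 (by linarith [norm_nonneg (x - x₀)])
  suffices (f x₀ - f x) / K ≤ infDist x S by rw [div_le_iff₀ hK] at this; linarith
  refine (le_infDist ⟨x₀, hx₀⟩).2 fun y hy => ?_
  rw [div_le_iff₀ hK, dist_eq_norm]
  -- Points of `S` farther from `x` than `x₀` are handled by the Lipschitz bound between `x`
  -- and `x₀`; nearer ones lie in the ball where `x₀` is minimal.
  rcases le_or_gt ‖x - x₀‖ ‖x - y‖ with hfar | hnear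
  · have := hLip x₀ (mem_closedBall_self (by linarith [norm_nonneg (x - x₀)])) x hxr
    rw [norm_sub_rev] at this
    nlinarith [le_abs_self (f x₀ - f x)]
  · have hyx₀ : ‖y - x₀‖ ≤ 2 * ‖x - x₀‖ := by
      calc ‖y - x₀‖ ≤ ‖y - x‖ + ‖x - x₀‖ := norm_sub_le_norm_sub_add_norm_sub _ _ _
        _ ≤ 2 * ‖x - x₀‖ := by rw [norm_sub_rev]; linarith
    have := hLip y (mem_closedBall_iff_norm.2 (by linarith)) x hxr
    rw [norm_sub_rev] at this
    linarith [hmin y hy (by linarith), le_abs_self (f y - f x)]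

theorem abs_add_mul_norm_sub_le {X Y : Type*} [SeminormedAddCommGroup X]
    [SeminormedAddCommGroup Y] {f : X → ℝ} {g : X → Y} {c Kf Kg : ℝ} (hc : 0 ≤ c) {x x' : X}
    (hf : |f x - f x'| ≤ Kf * ‖x - x'‖) (hg : ‖g x - g x'‖ ≤ Kg * ‖x - x'‖) :
    |f x + c * ‖g x‖ - (f x' + c * ‖g x'‖)| ≤ (Kf + c * Kg) * ‖x - x'‖ := by
  have hnorm : |‖g x‖ - ‖g x'‖| ≤ Kg * ‖x - x'‖ := (abs_norm_sub_norm_le _ _).trans hg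
  calc |f x + c * ‖g x‖ - (f x' + c * ‖g x'‖)| = |(f x - f x') + c * (‖g x‖ - ‖g x'‖)| := by
        congr 1; ring
    _ ≤ |f x - f x'| + |c * (‖g x‖ - ‖g x'‖)| := abs_add_le _ _
    _ = |f x - f x'| + c * |‖g x‖ - ‖g x'‖| := by rw [abs_mul, abs_of_nonneg hc]
    _ ≤ (Kf + c * Kg) * ‖x - x'‖ := by nlinarith

section

variable {X Y : Type*} [NormedAddCommGroup X] [NormedSpace ℝ X]
  [NormedAddCommGroup Y] [NormedSpace ℝ Y]

theorem frequently_exists_mem_near_of_mem_contingentCone {C : Set X} {x₀ h : X} (hx₀ : x₀ ∈ C)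
    (hh : h ∈ contingentCone C x₀) {ε : ℝ} (hε : 0 < ε) :
    ∃ᶠ τ in 𝓝[>] (0 : ℝ), ∃ z ∈ C, ‖z - (x₀ + τ • h)‖ < ε * τ := by
  have hcobdd : IsCoboundedUnder (· ≥ ·) (𝓝[>] (0 : ℝ))
      (fun τ => infDist (x₀ + τ • h) C / τ) := by
    refine isCoboundedUnder_ge_of_eventually_le _ (x := ‖h‖) ?_
    filter_upwards [self_mem_nhdsWithin] with τ (hτ : 0 < τ)
    rw [div_le_iff₀ hτ]
    calc infDist (x₀ + τ • h) C ≤ dist (x₀ + τ • h) x₀ := infDist_le_dist_of_mem hx₀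
      _ = ‖h‖ * τ := by simp [norm_smul, abs_of_pos hτ, mul_comm]
  have hlim : liminf (fun τ => infDist (x₀ + τ • h) C / τ) (𝓝[>] 0) < ε := by
    rwa [show liminf _ _ = (0 : ℝ) from hh]
  refine ((frequently_lt_of_liminf_lt hcobdd hlim).and_eventually self_mem_nhdsWithin).mono ?_
  rintro τ ⟨hlt, hτ : 0 < τ⟩
  rw [div_lt_iff₀ hτ] at hlt
  obtain ⟨z, hzC, hz⟩ := (infDist_lt_iff ⟨x₀, hx₀⟩).1 hlt
  exact ⟨z, hzC, by rwa [← dist_eq_norm, dist_comm]⟩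

theorem nonneg_of_tendsto_slope_of_mem_contingentCone {φ : X → ℝ} {C : Set X} {x₀ h : X}
    {r L d : ℝ} (hx₀ : x₀ ∈ C) (hr : 0 < r) (hL : 0 ≤ L)
    (hLip : ∀ x ∈ closedBall x₀ r, ∀ x' ∈ closedBall x₀ r, |φ x - φ x'| ≤ L * ‖x - x'‖)
    (hmin : ∀ x ∈ C, ‖x - x₀‖ ≤ r → φ x₀ ≤ φ x) (hh : h ∈ contingentCone C x₀)
    (hd : Tendsto (fun τ : ℝ => τ⁻¹ * (φ (x₀ + τ • h) - φ x₀)) (𝓝[>] 0) (𝓝 d)) : 0 ≤ d := by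
  have hbound : ∀ ε > 0, -(L * ε) ≤ d := by
    intro ε hε
    have hsmall : ∀ᶠ τ in 𝓝[>] (0 : ℝ), τ * (‖h‖ + ε) < r := by
      have : Tendsto (fun τ : ℝ => τ * (‖h‖ + ε)) (𝓝 0) (𝓝 0) :=
        (continuous_mul_const _).tendsto' 0 0 (zero_mul _)
      exact (tendsto_nhdsWithin_of_tendsto_nhds this).eventually_lt_const hr
    refine ge_of_tendsto_of_frequently hd <|
      ((frequently_exists_mem_near_of_mem_contingentCone hx₀ hh hε).and_eventually
        (hsmall.and self_mem_nhdsWithin)).mono ?_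
    rintro τ ⟨⟨z, hzC, hz⟩, hτr, hτ : 0 < τ⟩
    have hu : ‖x₀ + τ • h - x₀‖ = τ * ‖h‖ := by simp [norm_smul, abs_of_pos hτ]
    have hz₀ : ‖z - x₀‖ ≤ r := by
      calc ‖z - x₀‖ ≤ ‖z - (x₀ + τ • h)‖ + ‖x₀ + τ • h - x₀‖ :=
            norm_sub_le_norm_sub_add_norm_sub _ _ _
        _ ≤ r := by nlinarith
    have hLz := hLip z (mem_closedBall_iff_norm.2 hz₀) (x₀ + τ • h)
      (mem_closedBall_iff_norm.2 (by nlinarith [norm_nonneg h]))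
    -- `φ x₀ ≤ φ z ≤ φ (x₀ + τ • h) + L ε τ`
    rw [le_inv_mul_iff₀ hτ]
    nlinarith [hmin z hzC hz₀, le_abs_self (φ z - φ (x₀ + τ • h)),
      mul_le_mul_of_nonneg_left hz.le hL]
  have hlim : Tendsto (fun ε : ℝ => -(L * ε)) (𝓝[>] 0) (𝓝 0) :=
    tendsto_nhdsWithin_of_tendsto_nhds <|
      (continuous_const_mul L).neg.tendsto' 0 0 (by simp)
  exact le_of_tendsto hlim (eventually_mem_nhdsWithin.mono hbound)

theorem GateauxAt.tendsto_inv_mul_norm {g : X → Y} {x : X} {D : X →L[ℝ] Y}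
    (hg : GateauxAt g x D) (hgx : g x = 0) (h : X) :
    Tendsto (fun τ : ℝ => τ⁻¹ * ‖g (x + τ • h)‖) (𝓝[>] 0) (𝓝 ‖D h‖) :=
  (hg h).norm.congr' <| eventually_mem_nhdsWithin.mono fun τ (hτ : 0 < τ) => by
    simp [hgx, norm_smul, abs_of_pos hτ]

theorem nonneg_add_mul_norm_of_mem_contingentCone {C : Set X} {f : X → ℝ} {g : X → Y} {x₀ : X}
    {Df : X →L[ℝ] ℝ} {Dg : X →L[ℝ] Y} {c Kf Kg ρ rf rg : ℝ} (hx₀ : x₀ ∈ C) (hgx₀ : g x₀ = 0)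
    (hc : 0 ≤ c) (hρ : 0 < ρ) (hmin : ∀ x ∈ C, ‖x - x₀‖ ≤ ρ → f x₀ ≤ f x + c * ‖g x‖)
    (hDf : GateauxAt f x₀ Df) (hDg : GateauxAt g x₀ Dg)
    (hKf : 0 ≤ Kf) (hrf : 0 < rf)
    (hf : ∀ x ∈ closedBall x₀ rf, ∀ x' ∈ closedBall x₀ rf, |f x - f x'| ≤ Kf * ‖x - x'‖)
    (hKg : 0 ≤ Kg) (hrg : 0 < rg)
    (hg : ∀ x ∈ closedBall x₀ rg, ∀ x' ∈ closedBall x₀ rg, ‖g x - g x'‖ ≤ Kg * ‖x - x'‖)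
    {h : X} (hh : h ∈ contingentCone C x₀) : 0 ≤ Df h + c * ‖Dg h‖ := by
  have hball {r r' : ℝ} (hr : r ≤ r') {x : X} (hx : x ∈ closedBall x₀ r) : x ∈ closedBall x₀ r' :=
    closedBall_subset_closedBall hr hx
  refine nonneg_of_tendsto_slope_of_mem_contingentCone (φ := fun x => f x + c * ‖g x‖)
    (r := min ρ (min rf rg)) hx₀ (by positivity) (by positivity : 0 ≤ Kf + c * Kg)
    (fun x hx x' hx' => abs_add_mul_norm_sub_le hc
      (hf x (hball (by simp) hx) x' (hball (by simp) hx'))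
      (hg x (hball (by simp) hx) x' (hball (by simp) hx')))
    (fun x hxC hx => by simpa [hgx₀] using hmin x hxC (hx.trans (min_le_left _ _))) hh ?_
  refine ((hDf h).add ((hDg.tendsto_inv_mul_norm hgx₀ h).const_mul c)).congr fun τ => ?_
  simp only [hgx₀, norm_zero, mul_zero, add_zero, smul_eq_mul]
  ring

end

section Multiplier

variable {E Y : Type*} [AddCommGroup E] [Module ℝ E] [NormedAddCommGroup Y] [NormedSpace ℝ Y]
  {K : Set E} {ℓ : E →ₗ[ℝ] ℝ} {A : E →ₗ[ℝ] Y} {c : ℝ}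

-- Upward closed, so that sums and nonnegative multiples of bounds are again bounds.
variable (K ℓ A c) in
def penaltyBounds (y : Y) : Set ℝ :=
  {z | ∃ h ∈ K, ∃ t : ℝ, 0 ≤ t ∧ t * ℓ h + c * ‖y - t • A h‖ ≤ z}

variable (K ℓ A c) in
def penaltyValue (y : Y) : ℝ :=
  sInf (penaltyBounds K ℓ A c y)

theorem mul_norm_mem_penaltyBounds (hK : K.Nonempty) (y : Y) :
    c * ‖y‖ ∈ penaltyBounds K ℓ A c y :=
  let ⟨h, hh⟩ := hK
  ⟨h, hh, 0, le_rfl, by simp⟩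

theorem neg_mul_norm_le_of_mem_penaltyBounds (hc : 0 ≤ c)
    (hnn : ∀ h ∈ K, 0 ≤ ℓ h + c * ‖A h‖) {y : Y} {z : ℝ} (hz : z ∈ penaltyBounds K ℓ A c y) :
    -(c * ‖y‖) ≤ z := by
  obtain ⟨h, hh, t, ht, hz⟩ := hz
  have htri : t * ‖A h‖ - ‖y‖ ≤ ‖y - t • A h‖ := by
    calc t * ‖A h‖ - ‖y‖ = ‖t • A h‖ - ‖y‖ := by rw [norm_smul, Real.norm_of_nonneg ht]
      _ ≤ ‖t • A h - y‖ := norm_sub_norm_le _ _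
      _ = ‖y - t • A h‖ := norm_sub_rev _ _
  nlinarith [mul_nonneg ht (hnn h hh), mul_le_mul_of_nonneg_left htri hc]

theorem bddBelow_penaltyBounds (hc : 0 ≤ c) (hnn : ∀ h ∈ K, 0 ≤ ℓ h + c * ‖A h‖) (y : Y) :
    BddBelow (penaltyBounds K ℓ A c y) :=
  ⟨_, fun _ => neg_mul_norm_le_of_mem_penaltyBounds hc hnn⟩

theorem smul_penaltyBounds_subset {b : ℝ} (hb : 0 ≤ b) (y : Y) :
    b • penaltyBounds K ℓ A c y ⊆ penaltyBounds K ℓ A c (b • y) := by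
  rintro _ ⟨z, ⟨h, hh, t, ht, hz⟩, rfl⟩
  refine ⟨h, hh, b * t, mul_nonneg hb ht, ?_⟩
  rw [mul_smul, ← smul_sub, norm_smul, Real.norm_of_nonneg hb]
  change _ ≤ b * z
  nlinarith

theorem penaltyBounds_add_subset (hK : Convex ℝ K) (hc : 0 ≤ c) (y₁ y₂ : Y) :
    penaltyBounds K ℓ A c y₁ + penaltyBounds K ℓ A c y₂ ⊆ penaltyBounds K ℓ A c (y₁ + y₂) := by
  rintro _ ⟨z₁, ⟨h₁, hh₁, t₁, ht₁, hz₁⟩, z₂, ⟨h₂, hh₂, t₂, ht₂, hz₂⟩, rfl⟩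
  have hsub : ‖y₁ + y₂ - (t₁ • A h₁ + t₂ • A h₂)‖ ≤ ‖y₁ - t₁ • A h₁‖ + ‖y₂ - t₂ • A h₂‖ := by
    rw [add_sub_add_comm]; exact norm_add_le _ _
  rcases (add_nonneg ht₁ ht₂).eq_or_lt with ht | ht
  · obtain ⟨rfl, rfl⟩ : t₁ = 0 ∧ t₂ = 0 := by constructor <;> linarith
    refine ⟨h₁, hh₁, 0, le_rfl, ?_⟩
    simp only [zero_smul, add_zero, zero_mul, zero_add, sub_zero] at hz₁ hz₂ hsub ⊢
    nlinarith
  · set t := t₁ + t₂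
    have hcomb : t • ((t₁ / t) • h₁ + (t₂ / t) • h₂) = t₁ • h₁ + t₂ • h₂ := by
      rw [smul_add, smul_smul, smul_smul, mul_div_cancel₀ _ ht.ne', mul_div_cancel₀ _ ht.ne']
    refine ⟨_, hK hh₁ hh₂ (div_nonneg ht₁ ht.le) (div_nonneg ht₂ ht.le)
      (by rw [← add_div, div_self ht.ne']), t, ht.le, ?_⟩
    rw [← smul_eq_mul, ← map_smul, ← map_smul, hcomb]
    simp only [map_add, map_smul, smul_eq_mul]
    nlinarith [mul_le_mul_of_nonneg_left hsub hc]

theorem penaltyValue_smul_le (hc : 0 ≤ c) (hnn : ∀ h ∈ K, 0 ≤ ℓ h + c * ‖A h‖)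
    (hne : K.Nonempty) {b : ℝ} (hb : 0 ≤ b) (y : Y) :
    penaltyValue K ℓ A c (b • y) ≤ b * penaltyValue K ℓ A c y := by
  unfold penaltyValue
  rw [← smul_eq_mul, ← Real.sInf_smul_of_nonneg hb]
  exact csInf_le_csInf (bddBelow_penaltyBounds hc hnn _)
    (Set.Nonempty.smul_set ⟨_, mul_norm_mem_penaltyBounds hne y⟩)
    (smul_penaltyBounds_subset hb y)

theorem penaltyValue_smul (hc : 0 ≤ c) (hnn : ∀ h ∈ K, 0 ≤ ℓ h + c * ‖A h‖)
    (hne : K.Nonempty) {b : ℝ} (hb : 0 < b) (y : Y) :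
    penaltyValue K ℓ A c (b • y) = b * penaltyValue K ℓ A c y := by
  refine le_antisymm (penaltyValue_smul_le hc hnn hne hb.le y) ((le_inv_mul_iff₀ hb).1 ?_)
  simpa [inv_smul_smul₀ hb.ne'] using penaltyValue_smul_le hc hnn hne (inv_nonneg.2 hb.le) (b • y)

theorem penaltyValue_add_le (hK : Convex ℝ K) (hc : 0 ≤ c)
    (hnn : ∀ h ∈ K, 0 ≤ ℓ h + c * ‖A h‖) (hne : K.Nonempty) (y₁ y₂ : Y) :
    penaltyValue K ℓ A c (y₁ + y₂) ≤ penaltyValue K ℓ A c y₁ + penaltyValue K ℓ A c y₂ := by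
  have hne' (y : Y) : (penaltyBounds K ℓ A c y).Nonempty := ⟨_, mul_norm_mem_penaltyBounds hne y⟩
  unfold penaltyValue
  rw [← csInf_add (hne' y₁) (bddBelow_penaltyBounds hc hnn y₁) (hne' y₂)
    (bddBelow_penaltyBounds hc hnn y₂)]
  exact csInf_le_csInf (bddBelow_penaltyBounds hc hnn _) ((hne' y₁).add (hne' y₂))
    (penaltyBounds_add_subset hK hc y₁ y₂)

theorem abs_penaltyValue_le (hc : 0 ≤ c) (hnn : ∀ h ∈ K, 0 ≤ ℓ h + c * ‖A h‖)
    (hne : K.Nonempty) (y : Y) : |penaltyValue K ℓ A c y| ≤ c * ‖y‖ :=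
  abs_le.2 ⟨le_csInf ⟨_, mul_norm_mem_penaltyBounds hne y⟩
      fun _ => neg_mul_norm_le_of_mem_penaltyBounds hc hnn,
    csInf_le (bddBelow_penaltyBounds hc hnn y) (mul_norm_mem_penaltyBounds hne y)⟩

theorem penaltyValue_apply_le (hc : 0 ≤ c) (hnn : ∀ h ∈ K, 0 ≤ ℓ h + c * ‖A h‖) {h : E}
    (hh : h ∈ K) : penaltyValue K ℓ A c (A h) ≤ ℓ h :=
  csInf_le (bddBelow_penaltyBounds hc hnn _) ⟨h, hh, 1, zero_le_one, by simp⟩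

theorem exists_norm_le_forall_nonneg_add_apply (hK : Convex ℝ K) (hc : 0 ≤ c)
    (hnn : ∀ h ∈ K, 0 ≤ ℓ h + c * ‖A h‖) :
    ∃ ystar : Y →L[ℝ] ℝ, ‖ystar‖ ≤ c ∧ ∀ h ∈ K, 0 ≤ ℓ h + ystar (A h) := by
  rcases K.eq_empty_or_nonempty with rfl | hne
  · exact ⟨0, by simpa using hc, by simp⟩
  have hq := abs_penaltyValue_le hc hnn hne
  obtain ⟨L, -, hLq⟩ := exists_extension_of_le_sublinear ⊥ (penaltyValue K ℓ A c)
    (fun _ hb y => penaltyValue_smul hc hnn hne hb y) (penaltyValue_add_le hK hc hnn hne)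
    fun y => by
      change (0 : ℝ) ≤ _
      simpa [(Submodule.mem_bot ℝ).1 y.2] using (abs_le.1 (hq 0)).1
  have hL (y : Y) : ‖L y‖ ≤ c * ‖y‖ := by
    refine abs_le.2 ⟨?_, (hLq y).trans (le_of_abs_le (hq y))⟩
    have := (hLq (-y)).trans (le_of_abs_le (hq (-y)))
    rw [map_neg, norm_neg] at this
    linarith
  refine ⟨-L.mkContinuous c hL, by simpa using L.mkContinuous_norm_le hc hL, fun h hh => ?_⟩
  simp only [neg_apply, LinearMap.mkContinuous_apply]
  linarith [hLq (A h), penaltyValue_apply_le hc hnn hh]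

end Multiplier

theorem stmt2_general {X Y : Type*} [NormedAddCommGroup X] [NormedSpace ℝ X]
    [NormedAddCommGroup Y] [NormedSpace ℝ Y]
    (C : Set X)
    (f : X → ℝ) (g : X → Y) (x₀ : X) (hx₀C : x₀ ∈ C) (hgx₀ : g x₀ = 0)
    -- x₀ is a local minimizer of f over {x ∈ C : g x = 0}
    (hmin : ∃ ε > 0, ∀ x ∈ C, g x = 0 → ‖x - x₀‖ ≤ ε → f x₀ ≤ f x)
    -- f is Gâteaux differentiable at x₀ and Lipschitz with constant Kf near x₀
    (Df : X →L[ℝ] ℝ) (hDf : GateauxAt f x₀ Df)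
    (Kf : ℝ) (hKf : 0 < Kf)
    (hfLip : ∃ r > 0, ∀ x ∈ closedBall x₀ r, ∀ x' ∈ closedBall x₀ r,
      |f x - f x'| ≤ Kf * ‖x - x'‖)
    -- g is Gâteaux differentiable at x₀ and Lipschitz with constant Kg near x₀
    (Dg : X →L[ℝ] Y) (hDg : GateauxAt g x₀ Dg)
    (Kg : ℝ) (hKg : 0 < Kg)
    (hgLip : ∃ r > 0, ∀ x ∈ closedBall x₀ r, ∀ x' ∈ closedBall x₀ r,
      ‖g x - g x'‖ ≤ Kg * ‖x - x'‖)
    -- calmness of the system `g x = 0, x ∈ C` at x₀ with constant a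
    (a : ℝ) (ha : 0 < a) (s : ℝ) (hs : 0 < s)
    (hcalm : ∀ x ∈ closedBall x₀ s ∩ C, infDist x (g ⁻¹' {0} ∩ C) ≤ a * ‖g x‖)
    -- the contingent cone K(C, x₀) is convex
    (hconv : Convex ℝ (contingentCone C x₀)) :
    ∃ ystar : Y →L[ℝ] ℝ, ∃ xstar : X →L[ℝ] ℝ,
      ‖ystar‖ ≤ Kf * a ∧
      (∀ h ∈ contingentCone C x₀, xstar h ≤ 0) ∧
      Df + ystar.comp Dg + xstar = 0 := by
  obtain ⟨ε, hε, hmin⟩ := hmin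
  obtain ⟨rf, hrf, hfL⟩ := hfLip
  obtain ⟨rg, hrg, hgL⟩ := hgLip
  have hpenalty : ∀ x ∈ C, ‖x - x₀‖ ≤ min s (min ε rf / 2) → f x₀ ≤ f x + Kf * a * ‖g x‖ := by
    intro x hxC hx
    have hxs : x ∈ closedBall x₀ s := mem_closedBall_iff_norm.2 (hx.trans (min_le_left _ _))
    calc f x₀ ≤ f x + Kf * infDist x (g ⁻¹' {0} ∩ C) :=
          le_add_mul_infDist_of_localMinOn hKf ⟨hgx₀, hx₀C⟩ (fun y hy => hmin y hy.2 hy.1) hfL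
            (by linarith [min_le_right s (min ε rf / 2)])
      _ ≤ f x + Kf * a * ‖g x‖ := by
          rw [mul_assoc]; gcongr; exact hcalm x ⟨hxs, hxC⟩
  obtain ⟨ystar, hnorm, hystar⟩ := exists_norm_le_forall_nonneg_add_apply
    (ℓ := (Df : X →ₗ[ℝ] ℝ)) (A := (Dg : X →ₗ[ℝ] Y)) hconv (by positivity) fun h hh =>
      nonneg_add_mul_norm_of_mem_contingentCone hx₀C hgx₀ (by positivity) (by positivity)
        hpenalty hDf hDg hKf.le hrf hfL hKg.le hrg hgL hh
  refine ⟨ystar, -(Df + ystar.comp Dg), hnorm, fun h hh => ?_, add_neg_cancel _⟩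
  simpa [neg_le_iff_add_nonneg, add_comm] using hystar h hh

theorem stmt2 {X Y : Type*} [NormedAddCommGroup X] [NormedSpace ℝ X] [CompleteSpace X]
    [NormedAddCommGroup Y] [NormedSpace ℝ Y] [CompleteSpace Y]
    (C : Set X) (hCne : C.Nonempty) (hCcl : IsClosed C)
    (f : X → ℝ) (g : X → Y) (x₀ : X) (hx₀C : x₀ ∈ C) (hgx₀ : g x₀ = 0)
    -- x₀ is a local minimizer of f over {x ∈ C : g x = 0}
    (hmin : ∃ ε > 0, ∀ x ∈ C, g x = 0 → ‖x - x₀‖ ≤ ε → f x₀ ≤ f x)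
    -- f is Gâteaux differentiable at x₀ and Lipschitz with constant Kf near x₀
    (Df : X →L[ℝ] ℝ) (hDf : GateauxAt f x₀ Df)
    (Kf : ℝ) (hKf : 0 < Kf)
    (hfLip : ∃ r > 0, ∀ x ∈ closedBall x₀ r, ∀ x' ∈ closedBall x₀ r,
      |f x - f x'| ≤ Kf * ‖x - x'‖)
    -- g is Gâteaux differentiable at x₀ and Lipschitz with constant Kg near x₀
    (Dg : X →L[ℝ] Y) (hDg : GateauxAt g x₀ Dg)
    (Kg : ℝ) (hKg : 0 < Kg)
    (hgLip : ∃ r > 0, ∀ x ∈ closedBall x₀ r, ∀ x' ∈ closedBall x₀ r,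
      ‖g x - g x'‖ ≤ Kg * ‖x - x'‖)
    -- calmness of the system `g x = 0, x ∈ C` at x₀ with constant a
    (a : ℝ) (ha : 0 < a) (s : ℝ) (hs : 0 < s)
    (hcalm : ∀ x ∈ closedBall x₀ s ∩ C, infDist x (g ⁻¹' {0} ∩ C) ≤ a * ‖g x‖)
    -- the contingent cone K(C, x₀) is convex
    (hconv : Convex ℝ (contingentCone C x₀)) :
    ∃ ystar : Y →L[ℝ] ℝ, ∃ xstar : X →L[ℝ] ℝ,
      ‖ystar‖ ≤ Kf * a ∧
      (∀ h ∈ contingentCone C x₀, xstar h ≤ 0) ∧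
      Df + ystar.comp Dg + xstar = 0 :=
  stmt2_general C f g x₀ hx₀C hgx₀ hmin Df hDf Kf hKf hfLip Dg hDg Kg hKg hgLip a ha s hs hcalm
    hconv
end
end

section
/- Let X and Y be real Banach spaces, let A ⊆ X and B ⊆ Y be closed sets, let x₀ ∈ A and y₀ ∈ B, and endow X × Y with the product norm ‖(x, y)‖ = ‖x‖_X + ‖y‖_Y. Then K(A × B, (x₀, y₀)) ⊆ K(A, x₀) × K(B, y₀). Moreover, if A is tangentially regular at x₀ or B is tangentially regular at y₀, then K(A × B, (x₀, y₀)) = K(A, x₀) × K(B, y₀). -/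
open Filter Metric Topology Set

noncomputable section

/-- The adjacent (Ursescu) tangent cone to `A` at `x`. -/
def adjacentCone {X : Type*} [NormedAddCommGroup X] [NormedSpace ℝ X]
    (A : Set X) (x : X) : Set X :=
  {h | Tendsto (fun τ : ℝ => infDist (x + τ • h) A / τ) (𝓝[>] (0:ℝ)) (𝓝 0)}

/-- `A` is tangentially regular at `x` if the contingent and adjacent cones coincide. -/
def TangentiallyRegular {X : Type*} [NormedAddCommGroup X] [NormedSpace ℝ X]
    (A : Set X) (x : X) : Prop :=
  contingentCone A x = adjacentCone A x

/-- `X × Y` equipped with the sum norm `‖(x, y)‖ = ‖x‖ + ‖y‖`. -/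
abbrev toProd1 {X Y : Type*} : X × Y ≃ WithLp 1 (X × Y) := (WithLp.equiv 1 (X × Y)).symm

/-!
In the `ℓ¹` product the distance to `A × B` is the sum of the distances to `A` and to `B`, so
the difference quotient `dist((x₀, y₀) + τ (h, k), A × B) / τ` is the sum of the quotients of
the factors. Both summands lie in `[0, ‖h‖]` and `[0, ‖k‖]` for `τ > 0`, so a vanishing liminf of
the sum forces vanishing liminfs of the summands. Conversely, if one summand tends to `0` (the
regular factor), the liminf of the sum is the liminf of the other summand.
-/

namespace Filter

variable {ι : Type*} {l : Filter ι} [NeBot l] {u v : ι → ℝ}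

theorem liminf_eq_zero_of_liminf_add_eq_zero (hu₀ : 0 ≤ᶠ[l] u) (hv₀ : 0 ≤ᶠ[l] v)
    (hu : IsBoundedUnder (· ≤ ·) l u) (hv : IsBoundedUnder (· ≤ ·) l v)
    (huv : liminf (u + v) l = 0) : liminf u l = 0 ∧ liminf v l = 0 := by
  have hu_ge := isBoundedUnder_of_eventually_ge hu₀
  have hv_ge := isBoundedUnder_of_eventually_ge hv₀
  have hu_pos : 0 ≤ liminf u l := le_liminf_of_le hu.isCoboundedUnder_ge hu₀
  have hv_pos : 0 ≤ liminf v l := le_liminf_of_le hv.isCoboundedUnder_ge hv₀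
  have := le_liminf_add hu_ge hu hv_ge hv.isCoboundedUnder_ge
  constructor <;> linarith

theorem liminf_add_of_tendsto_zero (hu : Tendsto u l (𝓝 0))
    (hv_ge : IsBoundedUnder (· ≥ ·) l v) (hv_le : IsBoundedUnder (· ≤ ·) l v) :
    liminf (u + v) l = liminf v l := by
  apply le_antisymm
  · simpa [hu.limsup_eq] using
      liminf_add_le hu.isBoundedUnder_ge hu.isBoundedUnder_le hv_ge hv_le.isCoboundedUnder_ge
  · simpa [hu.liminf_eq] using
      le_liminf_add hu.isBoundedUnder_ge hu.isBoundedUnder_le hv_ge hv_le.isCoboundedUnder_ge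

end Filter

theorem infDist_toProd1_image_prod {X Y : Type*} [NormedAddCommGroup X] [NormedAddCommGroup Y]
    {A : Set X} {B : Set Y} (hA : A.Nonempty) (hB : B.Nonempty) (x : X) (y : Y) :
    infDist (toProd1 (x, y)) (toProd1 '' (A ×ˢ B)) = infDist x A + infDist y B := by
  have dist_eq (a : X) (b : Y) :
      dist (toProd1 (x, y)) (toProd1 (a, b)) = dist x a + dist y b :=
    WithLp.prod_dist_eq_of_L1 _ _
  apply le_antisymm
  · have hle : ∀ a ∈ A, ∀ b ∈ B,
        infDist (toProd1 (x, y)) (toProd1 '' (A ×ˢ B)) ≤ dist x a + dist y b :=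
      fun a ha b hb => dist_eq a b ▸ infDist_le_dist_of_mem ⟨(a, b), ⟨ha, hb⟩, rfl⟩
    have hA_le : ∀ b ∈ B,
        infDist (toProd1 (x, y)) (toProd1 '' (A ×ˢ B)) - dist y b ≤ infDist x A :=
      fun b hb => (le_infDist hA).2 fun a ha => by linarith [hle a ha b hb]
    have hB_le : infDist (toProd1 (x, y)) (toProd1 '' (A ×ˢ B)) - infDist x A ≤ infDist y B :=
      (le_infDist hB).2 fun b hb => by linarith [hA_le b hb]
    linarith
  · refine (le_infDist (hA.prod hB |>.image _)).2 ?_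
    rintro _ ⟨⟨a, b⟩, ⟨ha, hb⟩, rfl⟩
    rw [dist_eq]
    exact add_le_add (infDist_le_dist_of_mem ha) (infDist_le_dist_of_mem hb)

section infDistQuotient

variable {X : Type*} [NormedAddCommGroup X] [NormedSpace ℝ X]

def infDistQuotient (A : Set X) (x h : X) (τ : ℝ) : ℝ :=
  infDist (x + τ • h) A / τ

theorem mem_contingentCone_iff {A : Set X} {x h : X} :
    h ∈ contingentCone A x ↔ liminf (infDistQuotient A x h) (𝓝[>] 0) = 0 :=
  Iff.rfl

theorem mem_adjacentCone_iff {A : Set X} {x h : X} :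
    h ∈ adjacentCone A x ↔ Tendsto (infDistQuotient A x h) (𝓝[>] 0) (𝓝 0) :=
  Iff.rfl

theorem infDistQuotient_nonneg (A : Set X) (x h : X) :
    0 ≤ᶠ[𝓝[>] 0] infDistQuotient A x h :=
  eventually_mem_nhdsWithin.mono fun _ hτ => div_nonneg infDist_nonneg (le_of_lt hτ)

theorem infDistQuotient_le_norm {A : Set X} {x : X} (hx : x ∈ A) (h : X) :
    ∀ᶠ τ in 𝓝[>] 0, infDistQuotient A x h τ ≤ ‖h‖ :=
  eventually_mem_nhdsWithin.mono fun τ (hτ : 0 < τ) => by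
    rw [infDistQuotient, div_le_iff₀ hτ]
    calc infDist (x + τ • h) A ≤ dist (x + τ • h) x := infDist_le_dist_of_mem hx
      _ = ‖h‖ * τ := by rw [dist_self_add_left, norm_smul, Real.norm_of_nonneg hτ.le, mul_comm]

theorem isBoundedUnder_ge_infDistQuotient (A : Set X) (x h : X) :
    IsBoundedUnder (· ≥ ·) (𝓝[>] 0) (infDistQuotient A x h) :=
  isBoundedUnder_of_eventually_ge (infDistQuotient_nonneg A x h)

theorem isBoundedUnder_le_infDistQuotient {A : Set X} {x : X} (hx : x ∈ A) (h : X) :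
    IsBoundedUnder (· ≤ ·) (𝓝[>] 0) (infDistQuotient A x h) :=
  isBoundedUnder_of_eventually_le (infDistQuotient_le_norm hx h)

theorem infDistQuotient_toProd1_image_prod {Y : Type*} [NormedAddCommGroup Y] [NormedSpace ℝ Y]
    {A : Set X} {B : Set Y} (hA : A.Nonempty) (hB : B.Nonempty) (x h : X) (y k : Y) :
    infDistQuotient (toProd1 '' (A ×ˢ B)) (toProd1 (x, y)) (toProd1 (h, k))
      = infDistQuotient A x h + infDistQuotient B y k :=
  funext fun τ => by
    simp only [infDistQuotient, Pi.add_apply, ← add_div]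
    exact congrArg (· / τ) (infDist_toProd1_image_prod hA hB (x + τ • h) (y + τ • k))

end infDistQuotient

theorem stmt3_general {X Y : Type*} [NormedAddCommGroup X] [NormedSpace ℝ X]
    [NormedAddCommGroup Y] [NormedSpace ℝ Y]
    (A : Set X) (B : Set Y)
    (x₀ : X) (y₀ : Y) (hx₀ : x₀ ∈ A) (hy₀ : y₀ ∈ B) :
    contingentCone (toProd1 '' (A ×ˢ B)) (toProd1 (x₀, y₀))
      ⊆ toProd1 '' (contingentCone A x₀ ×ˢ contingentCone B y₀)
    ∧ ((TangentiallyRegular A x₀ ∨ TangentiallyRegular B y₀) →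
        contingentCone (toProd1 '' (A ×ˢ B)) (toProd1 (x₀, y₀))
          = toProd1 '' (contingentCone A x₀ ×ˢ contingentCone B y₀)) := by
  have hsum (h : X) (k : Y) := infDistQuotient_toProd1_image_prod ⟨x₀, hx₀⟩ ⟨y₀, hy₀⟩ x₀ h y₀ k
  have subset : contingentCone (toProd1 '' (A ×ˢ B)) (toProd1 (x₀, y₀))
      ⊆ toProd1 '' (contingentCone A x₀ ×ˢ contingentCone B y₀) := by
    intro p hp
    obtain ⟨⟨h, k⟩, rfl⟩ := toProd1.surjective p
    rw [mem_contingentCone_iff, hsum] at hp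
    exact ⟨(h, k), liminf_eq_zero_of_liminf_add_eq_zero (infDistQuotient_nonneg A x₀ h)
      (infDistQuotient_nonneg B y₀ k) (isBoundedUnder_le_infDistQuotient hx₀ h)
      (isBoundedUnder_le_infDistQuotient hy₀ k) hp, rfl⟩
  refine ⟨subset, fun hreg => subset.antisymm ?_⟩
  rintro _ ⟨⟨h, k⟩, ⟨hh, hk⟩, rfl⟩
  rw [mem_contingentCone_iff, hsum]
  rcases hreg with hregA | hregB
  · rw [liminf_add_of_tendsto_zero (mem_adjacentCone_iff.1 (hregA ▸ hh))
      (isBoundedUnder_ge_infDistQuotient B y₀ k) (isBoundedUnder_le_infDistQuotient hy₀ k)]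
    exact hk
  · rw [add_comm, liminf_add_of_tendsto_zero (mem_adjacentCone_iff.1 (hregB ▸ hk))
      (isBoundedUnder_ge_infDistQuotient A x₀ h) (isBoundedUnder_le_infDistQuotient hx₀ h)]
    exact hh

theorem stmt3 {X Y : Type*} [NormedAddCommGroup X] [NormedSpace ℝ X] [CompleteSpace X]
    [NormedAddCommGroup Y] [NormedSpace ℝ Y] [CompleteSpace Y]
    (A : Set X) (B : Set Y) (hA : IsClosed A) (hB : IsClosed B)
    (x₀ : X) (y₀ : Y) (hx₀ : x₀ ∈ A) (hy₀ : y₀ ∈ B) :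
    contingentCone (toProd1 '' (A ×ˢ B)) (toProd1 (x₀, y₀))
      ⊆ toProd1 '' (contingentCone A x₀ ×ˢ contingentCone B y₀)
    ∧ ((TangentiallyRegular A x₀ ∨ TangentiallyRegular B y₀) →
        contingentCone (toProd1 '' (A ×ˢ B)) (toProd1 (x₀, y₀))
          = toProd1 '' (contingentCone A x₀ ×ˢ contingentCone B y₀)) :=
  stmt3_general A B x₀ y₀ hx₀ hy₀
end
end

section
/- Let X and Y be real Banach spaces, C ⊆ X and D ⊆ Y nonempty closed sets, g : X → Y, x₀ ∈ C with g(x₀) ∈ D, and set y₀ := g(x₀). Assume g is Lipschitz on a neighborhood of x₀. Define g̃ : X × Y → Y by g̃(x, y) := g(x) − y, and endow X × Y with the norm ‖(x, y)‖ = ‖x‖_X + ‖y‖_Y. Then the following are equivalent: (i) there exist a > 0 and s > 0 such that dist(x, g⁻¹(D) ∩ C) ≤ a · dist(g(x), D) for all x ∈ B(x₀, s) ∩ C; (ii) there exist a' > 0 and s' > 0 such that dist((x, y), g̃⁻¹(0) ∩ (C × D)) ≤ a' · ‖g(x) − y‖ for all (x, y) ∈ B((x₀, y₀), s') ∩ (C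 × D). -/
/-!
Write `S = g⁻¹(D) ∩ C` and `T = g̃⁻¹(0) ∩ (C × D)`, so that `T` is the graph of `g` over `S`.
The projection `(x, y) ↦ x` is 1-Lipschitz and maps `T` into `S`, so `dist(x, S) ≤ dist((x, y), T)`;
choosing `y ∈ D` almost nearest to `g x` turns (ii) into (i). Conversely, `x' ∈ S` lifts to
`(x', g x') ∈ T`, at distance at most `(K + 1)‖x - x'‖ + ‖g x - y‖` from `(x, y)` when `g` is
`K`-Lipschitz near `x₀`, so (i) gives (ii) with `a' = (K + 1) a + 1`. Both directions only use
near-minimizers close to `x₀`: an affine bound in `‖x - x'‖` valid for the points `x'` of a set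
near `x` already passes to the distance from `x` to that set.
-/

open Filter Metric Topology Set

noncomputable section

def gTilde {X Y : Type*} [NormedAddCommGroup X] [NormedAddCommGroup Y]
    (g : X → Y) (p : WithLp 1 (X × Y)) : Y :=
  g ((WithLp.equiv 1 (X × Y)) p).1 - ((WithLp.equiv 1 (X × Y)) p).2

def IsCalmAt {α : Type*} [PseudoMetricSpace α] (M Ω : Set α) (res : α → ℝ) (x₀ : α) : Prop :=
  ∃ a > 0, ∃ s > 0, ∀ x ∈ closedBall x₀ s ∩ Ω, infDist x M ≤ a * res x

theorem le_mul_infDist_add_of_forall_dist_lt {α : Type*} [PseudoMetricSpace α] {S : Set α}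
    {x : α} {v c b R : ℝ} (hS : S.Nonempty) (hc : 0 ≤ c) (hR : infDist x S < R)
    (h : ∀ x' ∈ S, dist x x' < R → v ≤ c * dist x x' + b) :
    v ≤ c * infDist x S + b := by
  have hlim : Tendsto (fun t ↦ c * t + b) (𝓝[>] (infDist x S)) (𝓝 (c * infDist x S + b)) :=
    (((continuous_const.mul continuous_id).add continuous_const).tendsto _).mono_left
      nhdsWithin_le_nhds
  refine ge_of_tendsto hlim ?_
  filter_upwards [Ioo_mem_nhdsGT hR] with t ⟨hdt, htR⟩
  obtain ⟨x', hx'S, hx'⟩ := (infDist_lt_iff hS).1 hdt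
  calc v ≤ c * dist x x' + b := h x' hx'S (hx'.trans htR)
    _ ≤ c * t + b := by gcongr

theorem toProd1_mem_image_prod {X Y : Type*} {C : Set X} {D : Set Y} {x : X} {y : Y} :
    toProd1 (x, y) ∈ toProd1 '' (C ×ˢ D) ↔ x ∈ C ∧ y ∈ D :=
  toProd1.injective.mem_set_image

section SumNormProduct

variable {X Y : Type*} [NormedAddCommGroup X] [NormedAddCommGroup Y]

theorem dist_toProd1 (x x' : X) (y y' : Y) :
    dist (toProd1 (x, y)) (toProd1 (x', y')) = dist x x' + dist y y' := by
  rw [WithLp.prod_dist_eq_add (by norm_num)]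
  simp

theorem gTilde_toProd1 (g : X → Y) (x : X) (y : Y) : gTilde g (toProd1 (x, y)) = g x - y := rfl

theorem toProd1_graph_mem {C : Set X} {D : Set Y} {g : X → Y} {x : X} (hx : x ∈ g ⁻¹' D ∩ C) :
    toProd1 (x, g x) ∈ gTilde g ⁻¹' {0} ∩ toProd1 '' (C ×ˢ D) :=
  ⟨sub_self (g x), toProd1_mem_image_prod.2 ⟨hx.2, hx.1⟩⟩

theorem infDist_le_infDist_toProd1 (C : Set X) (D : Set Y) (g : X → Y) (x : X) (y : Y) :
    infDist x (g ⁻¹' D ∩ C) ≤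
      infDist (toProd1 (x, y)) (gTilde g ⁻¹' {0} ∩ toProd1 '' (C ×ˢ D)) := by
  rcases (g ⁻¹' D ∩ C).eq_empty_or_nonempty with hS | ⟨x₁, hx₁⟩
  · simpa [hS] using infDist_nonneg
  refine (le_infDist ⟨_, toProd1_graph_mem hx₁⟩).2 ?_
  rintro _ ⟨hq, ⟨x', y'⟩, ⟨hx'C, hy'D⟩, rfl⟩
  have hgx' : g x' = y' := sub_eq_zero.1 hq
  calc infDist x (g ⁻¹' D ∩ C) ≤ dist x x' :=
        infDist_le_dist_of_mem ⟨show g x' ∈ D from hgx' ▸ hy'D, hx'C⟩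
    _ ≤ dist x x' + dist y y' := le_add_of_nonneg_right dist_nonneg
    _ = dist (toProd1 (x, y)) (toProd1 (x', y')) := (dist_toProd1 ..).symm

variable {C : Set X} {D : Set Y} {g : X → Y} {x₀ : X} {K : NNReal} {r : ℝ}

theorem isCalmAt_graph_of_isCalmAt (hx₀ : x₀ ∈ C) (hgx₀ : g x₀ ∈ D) (hr : 0 < r)
    (hK : LipschitzOnWith K g (closedBall x₀ r))
    (h : IsCalmAt (g ⁻¹' D ∩ C) C (fun x ↦ infDist (g x) D) x₀) :
    IsCalmAt (gTilde g ⁻¹' {0} ∩ toProd1 '' (C ×ˢ D)) (toProd1 '' (C ×ˢ D))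
      (fun p ↦ ‖gTilde g p‖) (toProd1 (x₀, g x₀)) := by
  obtain ⟨a, ha, s, hs, hcalm⟩ := h
  refine ⟨(K + 1) * a + 1, by positivity, min s (r / 3), by positivity, ?_⟩
  rintro _ ⟨hp, ⟨x, y⟩, ⟨hxC, hyD⟩, rfl⟩
  rw [mem_closedBall, dist_toProd1] at hp
  have hxs : dist x x₀ ≤ min s (r / 3) := by linarith [dist_nonneg (x := y) (y := g x₀)]
  have hxr : x ∈ closedBall x₀ r := by
    rw [mem_closedBall]; linarith [min_le_right s (r / 3)]
  have hx₀S : x₀ ∈ g ⁻¹' D ∩ C := ⟨hgx₀, hx₀⟩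
  have hS : infDist x (g ⁻¹' D ∩ C) < 2 * r / 3 :=
    (infDist_le_dist_of_mem hx₀S).trans_lt (by linarith [min_le_right s (r / 3)])
  have hT : infDist (toProd1 (x, y)) (gTilde g ⁻¹' {0} ∩ toProd1 '' (C ×ˢ D)) ≤
      (K + 1) * infDist x (g ⁻¹' D ∩ C) + ‖g x - y‖ := by
    refine le_mul_infDist_add_of_forall_dist_lt ⟨x₀, hx₀S⟩ (by positivity) hS
      fun x' hx' hxx' ↦ ?_
    have hx'r : x' ∈ closedBall x₀ r := by
      rw [mem_closedBall]
      linarith [dist_triangle_left x' x₀ x, min_le_right s (r / 3)]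
    calc _ ≤ dist (toProd1 (x, y)) (toProd1 (x', g x')) :=
          infDist_le_dist_of_mem (toProd1_graph_mem hx')
      _ = dist x x' + dist y (g x') := dist_toProd1 ..
      _ ≤ dist x x' + (dist y (g x) + dist (g x) (g x')) := by gcongr; exact dist_triangle ..
      _ ≤ dist x x' + (‖g x - y‖ + K * dist x x') := by
          rw [dist_comm y, ← dist_eq_norm]
          gcongr
          exact hK.dist_le_mul x hxr x' hx'r
      _ = (K + 1) * dist x x' + ‖g x - y‖ := by ring
  have hcalm_x : infDist x (g ⁻¹' D ∩ C) ≤ a * ‖g x - y‖ :=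
    (hcalm x ⟨mem_closedBall.2 (hxs.trans (min_le_left _ _)), hxC⟩).trans <| by
      gcongr
      simpa only [dist_eq_norm] using infDist_le_dist_of_mem (x := g x) hyD
  show _ ≤ _ * ‖gTilde g (toProd1 (x, y))‖
  calc _ ≤ (K + 1) * infDist x (g ⁻¹' D ∩ C) + ‖g x - y‖ := hT
    _ ≤ (K + 1) * (a * ‖g x - y‖) + ‖g x - y‖ := by gcongr
    _ = ((K + 1) * a + 1) * ‖gTilde g (toProd1 (x, y))‖ := by rw [gTilde_toProd1]; ring

theorem isCalmAt_of_isCalmAt_graph (hgx₀ : g x₀ ∈ D) (hr : 0 < r)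
    (hK : LipschitzOnWith K g (closedBall x₀ r))
    (h : IsCalmAt (gTilde g ⁻¹' {0} ∩ toProd1 '' (C ×ˢ D)) (toProd1 '' (C ×ˢ D))
      (fun p ↦ ‖gTilde g p‖) (toProd1 (x₀, g x₀))) :
    IsCalmAt (g ⁻¹' D ∩ C) C (fun x ↦ infDist (g x) D) x₀ := by
  obtain ⟨a', ha', s', hs', hcalm⟩ := h
  refine ⟨a', ha', min r (s' / (3 * (K + 1))), by positivity, ?_⟩
  rintro x ⟨hx, hxC⟩
  rw [mem_closedBall] at hx
  have hxr : x ∈ closedBall x₀ r := mem_closedBall.2 (hx.trans (min_le_left _ _))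
  have hxs : (K + 1) * dist x x₀ ≤ s' / 3 := by
    rw [← le_div_iff₀' (by positivity), div_div]
    exact hx.trans (min_le_right _ _)
  have hgx : dist (g x) (g x₀) ≤ K * dist x x₀ :=
    hK.dist_le_mul x hxr x₀ (mem_closedBall_self hr.le)
  have hD : infDist (g x) D < 2 * s' / 3 :=
    (infDist_le_dist_of_mem hgx₀).trans_lt (by nlinarith [dist_nonneg (x := x) (y := x₀)])
  rw [← add_zero (a' * _)]
  refine le_mul_infDist_add_of_forall_dist_lt ⟨_, hgx₀⟩ ha'.le hD fun y hyD hy ↦ ?_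
  have hp : toProd1 (x, y) ∈ closedBall (toProd1 (x₀, g x₀)) s' := by
    rw [mem_closedBall, dist_toProd1]
    linarith [dist_triangle_left y (g x₀) (g x)]
  calc _ ≤ infDist (toProd1 (x, y)) (gTilde g ⁻¹' {0} ∩ toProd1 '' (C ×ˢ D)) :=
        infDist_le_infDist_toProd1 C D g x y
    _ ≤ a' * ‖gTilde g (toProd1 (x, y))‖ := hcalm _ ⟨hp, toProd1_mem_image_prod.2 ⟨hxC, hyD⟩⟩
    _ = a' * dist (g x) y + 0 := by rw [gTilde_toProd1, dist_eq_norm, add_zero]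

end SumNormProduct

theorem stmt6_general {X Y : Type*} [NormedAddCommGroup X]
    [NormedAddCommGroup Y]
    (C : Set X) (D : Set Y)
    (g : X → Y) (x₀ : X) (hx₀ : x₀ ∈ C) (hgx₀ : g x₀ ∈ D)
    -- g is Lipschitz on a neighborhood of x₀
    (hLip : ∃ K : NNReal, ∃ r > 0, LipschitzOnWith K g (closedBall x₀ r)) :
    -- (i) calmness of the system `g x ∈ D, x ∈ C` at `x₀` is equivalent to
    -- (ii) calmness of the system `g̃(x, y) = 0, (x, y) ∈ C × D` at `(x₀, g x₀)`
    ((∃ a > 0, ∃ s > 0, ∀ x ∈ closedBall x₀ s ∩ C,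
        infDist x (g ⁻¹' D ∩ C) ≤ a * infDist (g x) D)
      ↔
     (∃ a' > 0, ∃ s' > 0,
        ∀ p ∈ closedBall (toProd1 (x₀, g x₀)) s' ∩ (toProd1 '' (C ×ˢ D)),
          infDist p ((gTilde g) ⁻¹' {0} ∩ (toProd1 '' (C ×ˢ D)))
            ≤ a' * ‖gTilde g p‖)) := by
  obtain ⟨K, r, hr, hK⟩ := hLip
  exact ⟨isCalmAt_graph_of_isCalmAt hx₀ hgx₀ hr hK, isCalmAt_of_isCalmAt_graph hgx₀ hr hK⟩

theorem stmt6 {X Y : Type*} [NormedAddCommGroup X] [NormedSpace ℝ X] [CompleteSpace X]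
    [NormedAddCommGroup Y] [NormedSpace ℝ Y] [CompleteSpace Y]
    (C : Set X) (D : Set Y) (hCne : C.Nonempty) (hDne : D.Nonempty)
    (hCcl : IsClosed C) (hDcl : IsClosed D)
    (g : X → Y) (x₀ : X) (hx₀ : x₀ ∈ C) (hgx₀ : g x₀ ∈ D)
    -- g is Lipschitz on a neighborhood of x₀
    (hLip : ∃ K : NNReal, ∃ r > 0, LipschitzOnWith K g (closedBall x₀ r)) :
    -- (i) calmness of the system `g x ∈ D, x ∈ C` at `x₀` is equivalent to
    -- (ii) calmness of the system `g̃(x, y) = 0, (x, y) ∈ C × D` at `(x₀, g x₀)`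
    ((∃ a > 0, ∃ s > 0, ∀ x ∈ closedBall x₀ s ∩ C,
        infDist x (g ⁻¹' D ∩ C) ≤ a * infDist (g x) D)
      ↔
     (∃ a' > 0, ∃ s' > 0,
        ∀ p ∈ closedBall (toProd1 (x₀, g x₀)) s' ∩ (toProd1 '' (C ×ˢ D)),
          infDist p ((gTilde g) ⁻¹' {0} ∩ (toProd1 '' (C ×ˢ D)))
            ≤ a' * ‖gTilde g p‖)) :=
  stmt6_general C D g x₀ hx₀ hgx₀ hLip
end
end

section
/- In ℝ², let C := {(x, y) : x ≥ 0 and x² + (y + 1)² = 1} and D := {(x, y) : y = x} ∪ {(x, y) : x ≥ 0 and x² + (y + 2)² = 4}. Then C ∩ D = {(0, 0)}, and there exist NO constants a > 0 and s > 0 such that dist(u, C ∩ D) ≤ a · dist(u, D) for all u ∈ C with ‖u‖ ≤ s. -/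
/-!
Both half-circles `C` and `{x ≥ 0, x² + (y + 2)² = 4} ⊆ D` are tangent to the x-axis at the origin,
so they separate only quadratically. Concretely, a point `u ∈ C` satisfies `‖u‖² = -2 u₁`, hence lies
at distance `√(4 - ‖u‖²)` from the centre `(0, -2)` of the larger circle; projecting it radially onto
that circle gives `dist(u, D) ≤ 2 - √(4 - ‖u‖²) ≤ ‖u‖² / 2`. On the other hand
`dist(u, C ∩ D) = ‖u‖`, and `C` contains points of every norm `r ∈ [0, 2]`, so `r ≤ a r² / 2` would
have to hold for all small `r > 0`.
-/

open Filter Metric Topology Set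

noncomputable section

/-- The half-circle `C = {(x, y) : x ≥ 0, x² + (y + 1)² = 1}` in the Euclidean plane. -/
def Cset : Set (EuclideanSpace ℝ (Fin 2)) :=
  {u | 0 ≤ u 0 ∧ (u 0) ^ 2 + (u 1 + 1) ^ 2 = 1}

/-- The set `D = {(x, y) : y = x} ∪ {(x, y) : x ≥ 0, x² + (y + 2)² = 4}`
in the Euclidean plane. -/
def Dset : Set (EuclideanSpace ℝ (Fin 2)) :=
  {u | u 1 = u 0} ∪ {u | 0 ≤ u 0 ∧ (u 0) ^ 2 + (u 1 + 2) ^ 2 = 4}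

theorem Cset_inter_Dset : Cset ∩ Dset = {0} := by
  ext u
  simp only [Cset, Dset, mem_inter_iff, mem_union, mem_ofPred_eq, mem_singleton_iff]
  constructor
  · rintro ⟨⟨hx, hC⟩, hD | ⟨-, hD⟩⟩ <;>
    · ext i
      fin_cases i <;> simp only [Fin.zero_eta, Fin.mk_one, PiLp.zero_apply] <;>
        nlinarith [sq_nonneg (u 0), sq_nonneg (u 1)]
  · rintro rfl
    norm_num

namespace EuclideanSpace

theorem norm_sq_fin_two (u : EuclideanSpace ℝ (Fin 2)) : ‖u‖ ^ 2 = u 0 ^ 2 + u 1 ^ 2 := by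
  simp [real_norm_sq_eq, Fin.sum_univ_two]

theorem dist_fin_two (u v : EuclideanSpace ℝ (Fin 2)) :
    dist u v = √((u 0 - v 0) ^ 2 + (u 1 - v 1) ^ 2) := by
  simp [EuclideanSpace.dist_eq, Fin.sum_univ_two, Real.dist_eq, sq_abs]

end EuclideanSpace

open EuclideanSpace

theorem norm_sq_of_mem_Cset {u : EuclideanSpace ℝ (Fin 2)} (hu : u ∈ Cset) :
    ‖u‖ ^ 2 = -2 * u 1 := by
  rw [norm_sq_fin_two]
  linarith [hu.2]

theorem exists_mem_Cset_norm_eq {r : ℝ} (hr0 : 0 ≤ r) (hr2 : r ≤ 2) :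
    ∃ u ∈ Cset, ‖u‖ = r := by
  have hsq := Real.sq_sqrt (show 0 ≤ 1 - r ^ 2 / 4 by nlinarith)
  refine ⟨!₂[r * √(1 - r ^ 2 / 4), -r ^ 2 / 2], ⟨?_, ?_⟩, ?_⟩
  · simp only [Matrix.cons_val_zero]
    positivity
  · simp only [Matrix.cons_val_zero, Matrix.cons_val_one, Matrix.cons_val_fin_one]
    nlinarith
  · rw [← sq_eq_sq₀ (norm_nonneg _) hr0, norm_sq_fin_two]
    simp only [Matrix.cons_val_zero, Matrix.cons_val_one, Matrix.cons_val_fin_one]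
    nlinarith

/-- Radial projection onto the larger half-circle of `D`, centred at `(0, -2)`. -/
theorem infDist_Dset_le {p : EuclideanSpace ℝ (Fin 2)} {ρ : ℝ} (hp : 0 ≤ p 0) (hρ : 0 < ρ)
    (hpρ : p 0 ^ 2 + (p 1 + 2) ^ 2 = ρ ^ 2) : infDist p Dset ≤ |ρ - 2| := by
  set t := 2 / ρ
  have ht : t * ρ = 2 := div_mul_cancel₀ 2 hρ.ne'
  have hv : !₂[t * p 0, t * (p 1 + 2) - 2] ∈ Dset := by
    refine Or.inr ⟨?_, ?_⟩
    · simp only [Matrix.cons_val_zero]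
      positivity
    · simp only [Matrix.cons_val_zero, Matrix.cons_val_one, Matrix.cons_val_fin_one]
      linear_combination t ^ 2 * hpρ + (t * ρ + 2) * ht
  refine (infDist_le_dist_of_mem hv).trans_eq ?_
  rw [dist_fin_two, ← Real.sqrt_sq_eq_abs]
  simp only [Matrix.cons_val_zero, Matrix.cons_val_one, Matrix.cons_val_fin_one]
  congr 1
  linear_combination (1 - t) ^ 2 * hpρ + (t * ρ + 2 - 2 * ρ) * ht

theorem infDist_Dset_le_of_mem_Cset {u : EuclideanSpace ℝ (Fin 2)} (hu : u ∈ Cset)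
    (hu2 : ‖u‖ < 2) : infDist u Dset ≤ ‖u‖ ^ 2 / 2 := by
  have hr := norm_sq_of_mem_Cset hu
  have h4 : 0 < 4 - ‖u‖ ^ 2 := by nlinarith [norm_nonneg u]
  have hρ := Real.sq_sqrt h4.le
  have hρ_le : √(4 - ‖u‖ ^ 2) ≤ 2 := Real.sqrt_le_iff.2 ⟨zero_le_two, by nlinarith⟩
  have hρ_ge : 2 - ‖u‖ ^ 2 / 2 ≤ √(4 - ‖u‖ ^ 2) := by
    refine (Real.le_sqrt' ?_).2 ?_ <;> nlinarith [norm_nonneg u]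
  calc infDist u Dset ≤ |√(4 - ‖u‖ ^ 2) - 2| :=
        infDist_Dset_le hu.1 (Real.sqrt_pos.2 h4) (by rw [hρ]; linear_combination hu.2 + hr)
    _ ≤ ‖u‖ ^ 2 / 2 := by rw [abs_of_nonpos (by linarith)]; linarith

theorem stmt11 :
    Cset ∩ Dset = {0} ∧
    ¬ ∃ a > (0:ℝ), ∃ s > (0:ℝ), ∀ u ∈ Cset, ‖u‖ ≤ s →
        infDist u (Cset ∩ Dset) ≤ a * infDist u Dset := by
  refine ⟨Cset_inter_Dset, ?_⟩
  rintro ⟨a, ha, s, hs, h⟩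
  set r := min s (min 1 a⁻¹)
  have hr0 : 0 < r := lt_min hs (lt_min one_pos (inv_pos.2 ha))
  have hr1 : r ≤ 1 := (min_le_right _ _).trans (min_le_left _ _)
  have har : a * r ≤ 1 := by
    calc a * r ≤ a * a⁻¹ := by gcongr; exact (min_le_right _ _).trans (min_le_right _ _)
      _ = 1 := mul_inv_cancel₀ ha.ne'
  obtain ⟨u, huC, hu⟩ := exists_mem_Cset_norm_eq hr0.le (by linarith)
  have hcalm := h u huC (hu.trans_le (min_le_left _ _))
  rw [Cset_inter_Dset, infDist_singleton, dist_zero_right, hu] at hcalm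
  have hclose := infDist_Dset_le_of_mem_Cset huC (by linarith)
  rw [hu] at hclose
  nlinarith [mul_le_mul_of_nonneg_left hclose ha.le]
end
end
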